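/- arXiv:2003.08895 — 2 statements merged into one kernel-verified Lean document; each statement's English description precedes it below -/
import Mathlib

section
/- For every integer n ≥ 2 and every λ with 1/(n+1) ≤ λ ≤ λ₊(n) = (3/(n+2))·(1 − √((n−1)/(3(n+1)))), the maximum of p_ℓ(n,λ) over ℓ ∈ {0,…,n+1} is attained at ℓ = n−1. -/
/-!
Write `λ` for `t` and `s = (n+1)λ`. The hypotheses put `s` in `[1, 3/2]` and make
`s² + sλ - 6s + 6 = (n+1)(n+2)λ² - 6(n+1)λ + 6` nonnegative: `λ₊` is the smaller root of this
quadratic. For `ℓ ≤ n`, `p_ℓ` is the weight `C(n+1,ℓ)(1-λ)^ℓ λ^(n-ℓ) / (2(n+1)(1-λ))` times a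
quadratic factor, and consecutive weights have ratio `(n+1-ℓ)(1-λ) / ((ℓ+1)λ)`. Cancelling the
weight turns each comparison `p_ℓ ≤ p_(ℓ+1)` (`ℓ ≤ n-2`), `p_n ≤ p_(n-1)`, `p_(n+1) ≤ p_(n-1)` into
a polynomial inequality in `s`, `λ` and `u = n - ℓ` that holds on this region.
-/

/-- The output distribution p(n,λ) of the general attenuator with Fock environment |n⟩,
for ℓ = 0, …, n+1 (the case ℓ = n+1 is the continuous extension of the formula
… · λ^(n-ℓ) · …, which involves λ⁻¹, valid for all λ ∈ (0,1)). -/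
noncomputable def pdist (n ℓ : ℕ) (t : ℝ) : ℝ :=
  if ℓ ≤ n then
    1 / (2 * ((n : ℝ) + 1) * (1 - t)) * ((n + 1).choose ℓ : ℝ) * (1 - t) ^ ℓ * t ^ (n - ℓ) *
      ((1 - t) * ((n : ℝ) - (ℓ : ℝ) + 1) + (((n : ℝ) + 1) * (1 - t) - (ℓ : ℝ)) ^ 2)
  else ((n : ℝ) + 1) * t * (1 - t) ^ n / 2

/-- The output distribution q(n,λ) (spectrum of the joint output state). -/
noncomputable def qdist (n ℓ : ℕ) (t : ℝ) : ℝ :=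
  if ℓ ≤ n then
    1 / (2 * ((n : ℝ) + 1) * (1 - t)) * ((n + 1).choose ℓ : ℝ) * (1 - t) ^ ℓ * t ^ (n - ℓ) *
      (t * (ℓ : ℝ) + (((n : ℝ) + 1) * (1 - t) - (ℓ : ℝ)) ^ 2)
  else (1 - t) ^ n * (1 + ((n : ℝ) + 1) * t) / 2


noncomputable def lamPlus (n : ℕ) : ℝ :=
  3 / ((n : ℝ) + 2) * (1 - Real.sqrt (((n : ℝ) - 1) / (3 * ((n : ℝ) + 1))))

noncomputable def pdistWeight (n ℓ : ℕ) (t : ℝ) : ℝ :=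
  1 / (2 * ((n : ℝ) + 1) * (1 - t)) * ((n + 1).choose ℓ : ℝ) * (1 - t) ^ ℓ * t ^ (n - ℓ)

noncomputable def pdistFactor (n ℓ : ℕ) (t : ℝ) : ℝ :=
  (1 - t) * ((n : ℝ) - (ℓ : ℝ) + 1) + (((n : ℝ) + 1) * (1 - t) - (ℓ : ℝ)) ^ 2

lemma pdist_eq_of_le {n ℓ : ℕ} (h : ℓ ≤ n) (t : ℝ) :
    pdist n ℓ t = pdistWeight n ℓ t * pdistFactor n ℓ t := by
  rw [pdist, if_pos h, pdistWeight, pdistFactor]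

lemma pdistWeight_pos {n ℓ : ℕ} (h : ℓ ≤ n + 1) {t : ℝ} (ht₀ : 0 < t) (ht₁ : t < 1) :
    0 < pdistWeight n ℓ t := by
  have : 0 < 1 - t := sub_pos.2 ht₁
  have : 0 < ((n + 1).choose ℓ : ℝ) := by exact_mod_cast Nat.choose_pos h
  unfold pdistWeight
  positivity

lemma succ_mul_pdistWeight_succ {n ℓ : ℕ} (h : ℓ < n) (t : ℝ) :
    ((ℓ : ℝ) + 1) * t * pdistWeight n (ℓ + 1) t =
      ((n : ℝ) + 1 - ℓ) * (1 - t) * pdistWeight n ℓ t := by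
  obtain ⟨k, rfl⟩ : ∃ k, n = ℓ + 1 + k := ⟨n - (ℓ + 1), by omega⟩
  have hchoose : ((ℓ + 1 + k + 1).choose (ℓ + 1) : ℝ) * ((ℓ : ℝ) + 1) =
      ((ℓ + 1 + k + 1).choose ℓ : ℝ) * ((k : ℝ) + 2) := by
    have := Nat.choose_succ_right_eq (ℓ + 1 + k + 1) ℓ
    rw [show ℓ + 1 + k + 1 - ℓ = k + 2 by omega] at this
    exact_mod_cast this
  simp only [pdistWeight, show ℓ + 1 + k - ℓ = k + 1 by omega,
    show ℓ + 1 + k - (ℓ + 1) = k by omega]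
  push_cast
  linear_combination (1 / (2 * ((ℓ : ℝ) + 1 + k + 1) * (1 - t)) * (1 - t) ^ ℓ * (1 - t) * t ^ k * t)
    * hchoose

lemma pred_mul_pdist_succ {n : ℕ} (hn : 1 ≤ n) {t : ℝ} (ht : t ≠ 1) :
    (n : ℝ) * pdist n (n + 1) t = 2 * ((n : ℝ) + 1) * (1 - t) ^ 2 * pdistWeight n (n - 1) t := by
  obtain ⟨m, rfl⟩ : ∃ m, n = m + 1 := ⟨n - 1, by omega⟩
  have hchoose : ((m + 1 + 1).choose m : ℝ) = ((m : ℝ) + 2) * ((m : ℝ) + 1) / 2 := by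
    rw [show m + 1 + 1 = m + 2 by rfl, Nat.choose_symm_add, Nat.cast_choose_two]
    push_cast
    ring
  have h1t : 1 - t ≠ 0 := sub_ne_zero.2 (Ne.symm ht)
  rw [pdist, if_neg (by omega), pdistWeight, Nat.add_sub_cancel, show m + 1 - m = 1 by omega,
    hchoose]
  field_simp
  push_cast
  ring

lemma succ_mul_pdist_succ {n ℓ : ℕ} (h : ℓ < n) (t : ℝ) :
    ((ℓ : ℝ) + 1) * t * pdist n (ℓ + 1) t =
      pdistWeight n ℓ t * (((n : ℝ) + 1 - ℓ) * (1 - t) * pdistFactor n (ℓ + 1) t) := by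
  rw [pdist_eq_of_le h, ← mul_assoc, succ_mul_pdistWeight_succ h]
  ring

lemma succ_mul_pdist {n ℓ : ℕ} (h : ℓ ≤ n) (t : ℝ) :
    ((ℓ : ℝ) + 1) * t * pdist n ℓ t =
      pdistWeight n ℓ t * (((ℓ : ℝ) + 1) * t * pdistFactor n ℓ t) := by
  rw [pdist_eq_of_le h]
  ring

lemma pdist_le_pdist_succ_iff {n ℓ : ℕ} (h : ℓ < n) {t : ℝ} (ht₀ : 0 < t) (ht₁ : t < 1) :
    pdist n ℓ t ≤ pdist n (ℓ + 1) t ↔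
      ((ℓ : ℝ) + 1) * t * pdistFactor n ℓ t ≤
        ((n : ℝ) + 1 - ℓ) * (1 - t) * pdistFactor n (ℓ + 1) t := by
  rw [← mul_le_mul_iff_right₀ (by positivity : (0 : ℝ) < (ℓ + 1) * t), succ_mul_pdist h.le,
    succ_mul_pdist_succ h, mul_le_mul_iff_right₀ (pdistWeight_pos (by omega) ht₀ ht₁)]

lemma pdist_succ_le_pdist_iff {n ℓ : ℕ} (h : ℓ < n) {t : ℝ} (ht₀ : 0 < t) (ht₁ : t < 1) :
    pdist n (ℓ + 1) t ≤ pdist n ℓ t ↔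
      ((n : ℝ) + 1 - ℓ) * (1 - t) * pdistFactor n (ℓ + 1) t ≤
        ((ℓ : ℝ) + 1) * t * pdistFactor n ℓ t := by
  rw [← mul_le_mul_iff_right₀ (by positivity : (0 : ℝ) < (ℓ + 1) * t), succ_mul_pdist h.le,
    succ_mul_pdist_succ h, mul_le_mul_iff_right₀ (pdistWeight_pos (by omega) ht₀ ht₁)]

section RatioInequalities

/-! In the variables `s = (n+1)λ` and `u = n - ℓ`, the inequalities behind `p_ℓ ≤ p_(ℓ+1)`,
`p_n ≤ p_(n-1)` and `p_(n+1) ≤ p_(n-1)` respectively. -/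

variable {s t : ℝ}

lemma interior_ratio_ineq {u : ℝ} (hs₁ : 1 ≤ s) (hs₂ : s ≤ 3 / 2) (ht : 0 ≤ t)
    (hQ : 0 ≤ s ^ 2 + s * t - 6 * s + 6) (hu : 2 ≤ u) :
    (s - u * t) * ((1 - t) * (u + 1) + (u + 1 - s) ^ 2) ≤
      (u + 1) * (1 - t) * ((1 - t) * u + (u - s) ^ 2) := by
  have hv : 0 ≤ u - 2 := by linarith
  have hst : 0 ≤ s * t := mul_nonneg (by linarith) ht
  have hc : 0 ≤ 21 - 17 * s + 3 * s ^ 2 + s * t := by nlinarith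
  linear_combination mul_nonneg (by linarith : (0 : ℝ) ≤ 3 - s) hQ + pow_nonneg hv 3 +
    mul_nonneg (by linarith : (0 : ℝ) ≤ 8 - 3 * s) (sq_nonneg (u - 2)) + mul_nonneg hc hv

lemma top_ratio_ineq (hs₁ : 1 ≤ s) (hs₂ : s ≤ 3 / 2) (ht : 0 ≤ t) (h3t : 3 * t ≤ s) :
    2 * (1 - t) * ((1 - t) + (1 - s) ^ 2) ≤ (s - t) * (2 * (1 - t) + (2 - s) ^ 2) := by
  nlinarith [mul_nonneg (by linarith : (0 : ℝ) ≤ s - 1) (by linarith : (0 : ℝ) ≤ 3 / 2 - s),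
    mul_nonneg (by linarith : (0 : ℝ) ≤ s) ht]

lemma tail_ratio_ineq (hs₁ : 1 ≤ s) (ht : 0 ≤ t) (h3t : 3 * t ≤ s) :
    2 * s * (1 - t) ^ 2 ≤ (s - t) * (2 * (1 - t) + (2 - s) ^ 2) := by
  nlinarith [mul_nonneg (by linarith : (0 : ℝ) ≤ s - 3 * t) ht,
    mul_nonneg (by linarith : (0 : ℝ) ≤ s - 1) ht]

end RatioInequalities

lemma le_three_halves_of_quadratic_nonneg {s t : ℝ} (hQ : 0 ≤ s ^ 2 + s * t - 6 * s + 6)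
    (hst : s + t ≤ 3) (h3t : 3 * t ≤ s) : s ≤ 3 / 2 := by
  nlinarith

lemma bounds_of_le_lamPlus {n : ℕ} {t : ℝ} (h : t ≤ lamPlus n) :
    ((n : ℝ) + 1) * t + t ≤ 3 ∧
      0 ≤ (((n : ℝ) + 1) * t) ^ 2 + ((n : ℝ) + 1) * t * t - 6 * (((n : ℝ) + 1) * t) + 6 := by
  have hsqrt : Real.sqrt (((n : ℝ) - 1) / (3 * ((n : ℝ) + 1))) ≤ 1 - ((n : ℝ) + 2) * t / 3 := by
    have : ((n : ℝ) + 2) * lamPlus n =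
        3 * (1 - Real.sqrt (((n : ℝ) - 1) / (3 * ((n : ℝ) + 1)))) := by
      unfold lamPlus
      field_simp
    nlinarith
  obtain ⟨hy, hr⟩ := Real.sqrt_le_iff.1 hsqrt
  rw [div_le_iff₀ (by positivity)] at hr
  refine ⟨by linarith, nonneg_of_mul_nonneg_right (a := ((n : ℝ) + 2) / 3) ?_ (by positivity)⟩
  linear_combination hr

lemma pdist_le_pdist_succ {n ℓ : ℕ} (hℓ : ℓ + 2 ≤ n) {t : ℝ} (ht : 0 < t)
    (hs₁ : 1 ≤ ((n : ℝ) + 1) * t) (hs₂ : ((n : ℝ) + 1) * t ≤ 3 / 2)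
    (hQ : 0 ≤ (((n : ℝ) + 1) * t) ^ 2 + ((n : ℝ) + 1) * t * t - 6 * (((n : ℝ) + 1) * t) + 6) :
    pdist n ℓ t ≤ pdist n (ℓ + 1) t := by
  have hℓn : (ℓ : ℝ) + 2 ≤ n := by exact_mod_cast hℓ
  have ht₁ : t < 1 := by nlinarith
  rw [pdist_le_pdist_succ_iff (by omega) ht ht₁]
  have key := interior_ratio_ineq hs₁ hs₂ ht.le hQ (u := n - ℓ) (by linarith)
  unfold pdistFactor
  push_cast
  linear_combination key

lemma pdist_self_le_pdist_pred {n : ℕ} (hn : 2 ≤ n) {t : ℝ} (ht : 0 < t)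
    (hs₁ : 1 ≤ ((n : ℝ) + 1) * t) (hs₂ : ((n : ℝ) + 1) * t ≤ 3 / 2) :
    pdist n n t ≤ pdist n (n - 1) t := by
  obtain ⟨m, rfl⟩ : ∃ m, n = m + 1 := ⟨n - 1, by omega⟩
  have hm : (1 : ℝ) ≤ m := by exact_mod_cast (by omega : 1 ≤ m)
  push_cast at hs₁ hs₂
  have ht₁ : t < 1 := by nlinarith
  rw [Nat.add_sub_cancel, pdist_succ_le_pdist_iff m.lt_succ_self ht ht₁]
  have key := top_ratio_ineq hs₁ hs₂ ht.le (by nlinarith)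
  unfold pdistFactor
  push_cast
  linear_combination key

lemma pdist_succ_le_pdist_pred {n : ℕ} (hn : 2 ≤ n) {t : ℝ} (ht₀ : 0 < t) (ht₁ : t < 1)
    (hs₁ : 1 ≤ ((n : ℝ) + 1) * t) :
    pdist n (n + 1) t ≤ pdist n (n - 1) t := by
  have hn' : (2 : ℝ) ≤ n := by exact_mod_cast hn
  have hF : pdistFactor n (n - 1) t = 2 * (1 - t) + (2 - ((n : ℝ) + 1) * t) ^ 2 := by
    rw [pdistFactor, Nat.cast_sub (by omega)]
    push_cast
    ring
  have key := mul_le_mul_of_nonneg_left (tail_ratio_ineq hs₁ ht₀.le (by nlinarith))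
    (pdistWeight_pos (n := n) (ℓ := n - 1) (by omega) ht₀ ht₁).le
  rw [pdist_eq_of_le (n := n) (ℓ := n - 1) (by omega), hF]
  refine le_of_mul_le_mul_left ?_ (by positivity : (0 : ℝ) < n * t)
  linear_combination t * pred_mul_pdist_succ (n := n) (by omega) ht₁.ne + key

lemma pdist_monotoneOn {n : ℕ} {t : ℝ} (ht : 0 < t)
    (hs₁ : 1 ≤ ((n : ℝ) + 1) * t) (hs₂ : ((n : ℝ) + 1) * t ≤ 3 / 2)
    (hQ : 0 ≤ (((n : ℝ) + 1) * t) ^ 2 + ((n : ℝ) + 1) * t * t - 6 * (((n : ℝ) + 1) * t) + 6) :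
    MonotoneOn (fun ℓ ↦ pdist n ℓ t) (Set.Iic (n - 1)) :=
  monotoneOn_of_le_succ Set.ordConnected_Iic fun ℓ _ _ hℓ ↦ by
    rw [Order.succ_eq_add_one, Set.mem_Iic] at hℓ
    exact pdist_le_pdist_succ (by omega) ht hs₁ hs₂ hQ

theorem pdist_max_at_n_sub_one (n : ℕ) (hn : 2 ≤ n) (t : ℝ)
    (h1 : 1 / ((n : ℝ) + 1) ≤ t) (h2 : t ≤ lamPlus n) :
    ∀ ℓ ≤ n + 1, pdist n ℓ t ≤ pdist n (n - 1) t := by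
  have hn' : (3 : ℝ) ≤ n + 1 := by exact_mod_cast (by omega : 3 ≤ n + 1)
  have ht : 0 < t := lt_of_lt_of_le (by positivity) h1
  have hs₁ : 1 ≤ ((n : ℝ) + 1) * t := by rwa [div_le_iff₀' (by positivity)] at h1
  have h3t : 3 * t ≤ ((n : ℝ) + 1) * t := by nlinarith
  obtain ⟨hst, hQ⟩ := bounds_of_le_lamPlus h2
  have hs₂ := le_three_halves_of_quadratic_nonneg hQ hst h3t
  intro ℓ hℓ
  rcases (by omega : ℓ ≤ n - 1 ∨ ℓ = n ∨ ℓ = n + 1) with hle | rfl | rfl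
  · exact pdist_monotoneOn ht hs₁ hs₂ hQ hle Set.self_mem_Iic hle
  · exact pdist_self_le_pdist_pred hn ht hs₁ hs₂
  · exact pdist_succ_le_pdist_pred hn ht (by nlinarith) hs₁
end

section
/- For every integer n ≥ 4 and every λ with 1/(n+1) ≤ λ ≤ 1/n, it holds that q_n(n,λ) ≤ p_{n−2}(n,λ). -/
lemma keylemma (N t : ℝ) (hN4 : 4 ≤ N) (ha : 1 ≤ (N+1)*t) (hb : N*t ≤ 1) :
    6*(1-t)^2*(N*t + (1-(N+1)*t)^2) ≤ N*(N-1)*t^2*(3*(1-t)+(3-(N+1)*t)^2) := by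
  nlinarith [sq_nonneg ((N+1)*t-1), sq_nonneg (1-N*t),
    mul_nonneg (sub_nonneg.2 ha) (sub_nonneg.2 hb), sq_nonneg t,
    mul_nonneg (mul_nonneg (sub_nonneg.2 ha) (sub_nonneg.2 hb)) (by linarith : (0:ℝ) ≤ N-4),
    mul_nonneg (sub_nonneg.2 ha) (by linarith : (0:ℝ) ≤ N-4),
    sq_nonneg ((N+1)*t-1 - (1-N*t))]

lemma ch2' (n : ℕ) : 2 * (n+1).choose 2 = (n+1) * n := by
  induction n with
  | zero => rfl
  | succ m ih =>
      rw [show m+1+1 = (m+1)+1 from rfl, Nat.choose_succ_succ, Nat.mul_add, ih,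
        Nat.choose_one_right]
      ring

lemma ch3' (n : ℕ) : 6 * (n+2).choose 3 = (n+2)*(n+1)*n := by
  induction n with
  | zero => rfl
  | succ m ih =>
      rw [show m+1+2 = (m+2)+1 from rfl, Nat.choose_succ_succ, Nat.mul_add, ih,
        show (6:ℕ) = 3*2 by rfl, Nat.mul_assoc, ch2']
      ring

theorem qdist_n_le_pdist_n_sub_two (n : ℕ) (hn : 4 ≤ n) (t : ℝ)
    (h1 : 1 / ((n : ℝ) + 1) ≤ t) (h2 : t ≤ 1 / (n : ℝ)) :
    qdist n n t ≤ pdist n (n - 2) t := by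
  have hN1 : (0:ℝ) < (n:ℝ) := by
    have : (4:ℝ) ≤ (n:ℝ) := by exact_mod_cast hn
    linarith
  have hN4 : (4:ℝ) ≤ (n:ℝ) := by exact_mod_cast hn
  have ht0 : 0 < t := lt_of_lt_of_le (by positivity) h1
  have ha : 1 ≤ ((n:ℝ)+1)*t := by
    rw [div_le_iff₀ (by linarith)] at h1; linarith
  have hb : (n:ℝ)*t ≤ 1 := by
    rw [le_div_iff₀ hN1] at h2; linarith
  have ht1 : t < 1 := by nlinarith
  have h1t : (0:ℝ) < 1 - t := by linarith
  -- unfold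
  rw [qdist, pdist, if_pos le_rfl, if_pos (by omega : n - 2 ≤ n)]
  -- choose values
  have hcn : ((n+1).choose n : ℝ) = (n:ℝ)+1 := by
    rw [Nat.choose_succ_self_right]; push_cast; ring
  have hsub : n - (n-2) = 2 := by omega
  have hcast2 : ((n-2 : ℕ) : ℝ) = (n:ℝ) - 2 := by
    push_cast [Nat.cast_sub (by omega : 2 ≤ n)]; ring
  have hch3 : 6 * (n+1).choose 3 = (n+1)*n*(n-1) := by
    obtain ⟨m, rfl⟩ : ∃ m, n = m + 4 := ⟨n - 4, by omega⟩
    rw [show m+4+1 = m+3+2 by omega, show m+4-1 = m+3 by omega,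
      show m+4 = m+3+1 by omega]
    exact ch3' (m+3)
  have hC3 : ((n+1).choose (n-2) : ℝ) = (((n:ℝ)+1)*(n:ℝ)*((n:ℝ)-1))/6 := by
    have hsym : (n+1).choose (n-2) = (n+1).choose 3 := by
      rw [show n - 2 = (n+1) - 3 by omega, Nat.choose_symm (by omega)]
    rw [hsym, eq_div_iff (by norm_num : (6:ℝ) ≠ 0)]
    have : ((6 * (n+1).choose 3 : ℕ) : ℝ) = (((n+1)*n*(n-1) : ℕ) : ℝ) := by
      exact_mod_cast congrArg (Nat.cast (R := ℝ)) hch3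
    push_cast [Nat.cast_sub (by omega : 1 ≤ n)] at this
    linarith
  rw [hcn, hC3, hsub, hcast2, Nat.sub_self]
  have hpow : (1-t)^n = (1-t)^(n-2) * (1-t)^2 := by
    rw [← pow_add]; congr 1; omega
  set p : ℝ := (1-t)^(n-2) with hp
  have hpnn : 0 ≤ p := by positivity
  set N : ℝ := (n:ℝ)
  have key := keylemma N t hN4 ha hb
  have hc : (0:ℝ) < 1/(2*(N+1)*(1-t)) := by positivity
  have main : p * (6*(1-t)^2*(N*t + (1-(N+1)*t)^2))
      ≤ p * (N*(N-1)*t^2*(3*(1-t)+(3-(N+1)*t)^2)) :=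
    mul_le_mul_of_nonneg_left key hpnn
  have := mul_le_mul_of_nonneg_left main (le_of_lt hc)
  calc 1 / (2 * (N + 1) * (1 - t)) * (N + 1) * (1 - t) ^ n * t ^ 0 *
        (t * N + ((N + 1) * (1 - t) - N) ^ 2)
      = ((N+1)/6) * (1/(2*(N+1)*(1-t)) * (p * (6*(1-t)^2*(N*t + (1-(N+1)*t)^2)))) := by
        rw [hpow]; ring
    _ ≤ ((N+1)/6) * (1/(2*(N+1)*(1-t)) * (p * (N*(N-1)*t^2*(3*(1-t)+(3-(N+1)*t)^2)))) := by
        apply mul_le_mul_of_nonneg_left this (by positivity)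
    _ = 1 / (2 * (N + 1) * (1 - t)) * ((N + 1) * N * (N - 1) / 6) * p * t ^ 2 *
        ((1 - t) * (N - (N - 2) + 1) + ((N + 1) * (1 - t) - (N - 2)) ^ 2) := by
        ring
end
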